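/- Let V be a vertex algebra and (W, Y_W) a quasi V-module. Then Y_W(𝒟v, x) = (d/dx) Y_W(v, x) for all v ∈ V, where 𝒟 is the canonical translation operator of V defined by 𝒟v = v_{−2}𝟏. -/
import Mathlib


/-- Generalized binomial coefficient `binom(n, i)` for `n : ℤ`. -/
noncomputable def genBinom (n : ℤ) (i : ℕ) : ℂ :=
  (∏ j ∈ Finset.range i, ((n : ℂ) - j)) / (Nat.factorial i : ℂ)

/-- Jacobi defect: the left side minus the right side of the component form of
the Jacobi identity, for an action `A` of `V` on `M` (`A u n w = uₙw`, where
`Y(u,x) = Σ uₙ x^{−n−1}`) and vertex operation modes `Yp` on `V`. -/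
noncomputable def jdefect {V M : Type*} [AddCommGroup V] [Module ℂ V]
    [AddCommGroup M] [Module ℂ M]
    (A : V → ℤ → M → M) (Yp : V → V → ℤ → V)
    (u v : V) (w : M) (l m n : ℤ) : M :=
  (∑ᶠ i : ℕ, (genBinom l i * (-1 : ℂ) ^ i) •
      (A u (l + m - i) (A v (n + i) w)
        - (-1 : ℂ) ^ l • A v (l + n - i) (A u (m + i) w)))
    - ∑ᶠ i : ℕ, genBinom m i • A (Yp u v (l + i)) (m + n - i) w

/-- `(V, Y, 𝟏)` is a vertex algebra, in terms of modes `Y u v n = uₙv`: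
truncation, vacuum, creation, and the (component form of the) Jacobi identity. -/
def IsVA {V : Type*} [AddCommGroup V] [Module ℂ V]
    (Y : V →ₗ[ℂ] V →ₗ[ℂ] (ℤ → V)) (vone : V) : Prop :=
  (∀ u v : V, ∃ N : ℤ, ∀ n ≥ N, Y u v n = 0) ∧
  (∀ (v : V) (n : ℤ), Y vone v n = if n = -1 then v else 0) ∧
  (∀ (v : V) (n : ℤ), 0 ≤ n → Y v vone n = 0) ∧
  (∀ v : V, Y v vone (-1) = v) ∧
  (∀ (u v w : V) (l m n : ℤ),
    jdefect (fun a k x => Y a x k) (fun a b k => Y a b k) u v w l m n = 0)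

section genBinomLemmas
open Finset

lemma genBinom_zero (n : ℤ) : genBinom n 0 = 1 := by simp [genBinom]

lemma genBinom_one (n : ℤ) : genBinom n 1 = (n : ℂ) := by simp [genBinom]

lemma genBinom_succ (n : ℤ) (i : ℕ) :
    genBinom n (i+1) = genBinom n i * (((n : ℂ) - i) / (i+1)) := by
  rw [genBinom, genBinom, div_mul_div_comm, Finset.prod_range_succ, Nat.factorial_succ]
  congr 1
  push_cast
  ring

lemma genBinom_natCast (a i : ℕ) : genBinom (a : ℤ) i = (a.choose i : ℂ) := by
  induction i with
  | zero => simp [genBinom_zero]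
  | succ i ih =>
    rw [genBinom_succ, ih]
    rcases lt_or_ge i a with h | h
    · have hN := Nat.choose_succ_right_eq a i
      have h3 : ((a.choose (i+1) : ℂ)) * ((i:ℂ)+1) = (a.choose i : ℂ) * ((a:ℂ) - i) := by
        have : ((a.choose (i+1) * (i+1) : ℕ) : ℂ) = ((a.choose i * (a - i) : ℕ) : ℂ) := by
          exact_mod_cast congrArg (fun n : ℕ => (n:ℂ)) hN
        push_cast [Nat.cast_sub h.le] at this
        linear_combination this
      have h2 : ((i:ℂ)+1) ≠ 0 := Nat.cast_add_one_ne_zero i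
      push_cast
      field_simp
      linear_combination -h3
    · rcases eq_or_lt_of_le h with rfl | h
      · simp [Nat.choose_succ_self]
      · rw [Nat.choose_eq_zero_of_lt h, Nat.choose_eq_zero_of_lt (by omega)]
        simp

lemma genBinom_neg (z : ℤ) (r : ℕ) :
    genBinom ((r : ℤ) - 1 - z) r = (-1 : ℂ) ^ r * genBinom z r := by
  rcases Nat.eq_zero_or_pos r with rfl | hr
  · simp [genBinom]
  rw [genBinom, genBinom, ← mul_div_assoc]
  congr 1
  have e1 : ∀ j ∈ range r, ((((r : ℤ) - 1 - z : ℤ)) : ℂ) - (j:ℂ)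
      = (fun j : ℕ => (j:ℂ) - (z:ℂ)) (r - 1 - j) := by
    intro j hj
    simp only [mem_range] at hj
    have : ((r - 1 - j : ℕ) : ℂ) = (r:ℂ) - 1 - (j:ℂ) := by
      have h1 : j ≤ r - 1 := by omega
      push_cast [Nat.cast_sub h1, Nat.cast_sub (by omega : 1 ≤ r)]
      ring
    simp only [this]
    push_cast
    ring
  rw [Finset.prod_congr rfl e1, Finset.prod_range_reflect (fun j : ℕ => (j:ℂ) - (z:ℂ)) r]
  have : ∀ j ∈ range r, (j:ℂ) - (z:ℂ) = (-1) * ((z:ℂ) - j) := by intro j _; ring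
  rw [Finset.prod_congr rfl this, Finset.prod_mul_distrib, Finset.prod_const]
  simp

lemma genBinom_pascal (z : ℤ) (r : ℕ) :
    genBinom (z + 1) (r + 1) = genBinom z (r + 1) + genBinom z r := by
  have h1 : (Nat.factorial r : ℂ) ≠ 0 := Nat.cast_ne_zero.2 (Nat.factorial_ne_zero r)
  have h2 : ((r:ℂ)+1) ≠ 0 := Nat.cast_add_one_ne_zero r
  set P : ℂ := ∏ j ∈ range r, ((z:ℂ) - j) with hP
  have hL : ∏ j ∈ range (r+1), ((((z + 1 : ℤ)):ℂ) - (j:ℂ)) = ((z:ℂ) + 1) * P := by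
    rw [Finset.prod_range_succ']
    have : ∀ j ∈ range r, (((z + 1 : ℤ)):ℂ) - ((j+1 : ℕ):ℂ) = (z:ℂ) - j := by
      intro j _; push_cast; ring
    rw [Finset.prod_congr rfl this]
    push_cast
    ring
  have hR : ∏ j ∈ range (r+1), ((z:ℂ) - (j:ℂ)) = P * ((z:ℂ) - r) := Finset.prod_range_succ _ _
  rw [genBinom, genBinom, genBinom, hL, hR, hP, Nat.factorial_succ]
  push_cast
  field_simp
  ring

lemma genBinom_vandermonde (a : ℕ) (z : ℤ) (r : ℕ) :
    ∑ i ∈ range (r + 1), genBinom (a : ℤ) i * genBinom z (r - i)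
      = genBinom ((a : ℤ) + z) r := by
  induction a generalizing r with
  | zero =>
    rw [Finset.sum_eq_single 0]
    · simp [genBinom_zero]
    · intro i hi hne
      rw [genBinom_natCast, Nat.choose_eq_zero_of_lt (by omega)]
      simp
    · simp
  | succ a ih =>
    rcases Nat.eq_zero_or_pos r with rfl | hr
    · simp [genBinom_zero]
    obtain ⟨r', rfl⟩ := Nat.exists_eq_add_of_lt hr
    simp only [Nat.zero_add] at *
    rw [Finset.sum_range_succ']
    push_cast
    have e1 : ∀ i ∈ range (r' + 1),
        genBinom ((a:ℤ)+1) (i+1) * genBinom z (r' - i)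
          = genBinom (a:ℤ) (i+1) * genBinom z (r' - i)
            + genBinom (a:ℤ) i * genBinom z (r' - i) := by
      intro i hi
      have hp : genBinom ((a:ℤ)+1) (i+1) = genBinom (a:ℤ) (i+1) + genBinom (a:ℤ) i :=
        genBinom_pascal (a:ℤ) i
      rw [hp, add_mul]
    rw [Finset.sum_congr rfl e1]
    have e2 : genBinom ((a:ℤ)+1) 0 * genBinom z (r' + 1)
        = genBinom (a:ℤ) 0 * genBinom z (r' + 1) := by
      rw [genBinom_zero, genBinom_zero]
    have e3 : ∑ i ∈ range (r' + 1), genBinom (a:ℤ) (i+1) * genBinom z (r' - i)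
          + genBinom (a:ℤ) 0 * genBinom z (r' + 1)
        = ∑ i ∈ range (r' + 1 + 1), genBinom (a:ℤ) i * genBinom z (r' + 1 - i) := by
      conv_rhs => rw [Finset.sum_range_succ']
      congr 1
      · apply Finset.sum_congr rfl
        intro i hi
        congr 2
        omega
    have goal1 : ∑ i ∈ range (r'+1), genBinom (a:ℤ) i * genBinom z (r' - i)
        = genBinom ((a:ℤ) + z) r' := ih r'
    have goal2 := ih (r'+1)
    calc ∑ i ∈ range (r'+1), (genBinom (a:ℤ) (i+1) * genBinom z (r' - i)
            + genBinom (a:ℤ) i * genBinom z (r' - i))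
          + genBinom ((a:ℤ)+1) 0 * genBinom z (r' + 1)
        = (∑ i ∈ range (r'+1), genBinom (a:ℤ) (i+1) * genBinom z (r' - i)
            + genBinom (a:ℤ) 0 * genBinom z (r' + 1))
          + ∑ i ∈ range (r'+1), genBinom (a:ℤ) i * genBinom z (r' - i) := by
          rw [e2]; rw [Finset.sum_add_distrib]; ring
      _ = genBinom ((a:ℤ) + z) (r'+1) + genBinom ((a:ℤ) + z) r' := by rw [e3, goal2, goal1]
      _ = genBinom ((a:ℤ) + 1 + z) (r'+1) := by
          rw [show (a:ℤ) + 1 + z = ((a:ℤ) + z) + 1 by ring, genBinom_pascal]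

lemma neg_one_zpow_aux (r : ℕ) : (-1 : ℂ) ^ (-1 - (r:ℤ)) = (-1 : ℂ) ^ (r + 1) := by
  have h : (-1 - (r:ℤ)) = -((r:ℤ) + 1) := by ring
  rw [h, zpow_neg]
  rw [show ((r:ℤ) + 1) = ((r + 1 : ℕ) : ℤ) by push_cast; ring, zpow_natCast]
  rcases Nat.even_or_odd (r+1) with he | ho
  · rw [he.neg_one_pow]; norm_num
  · rw [ho.neg_one_pow]; norm_num

end genBinomLemmas

section mainProof
open Finset


/-- helper for the coefficient computation -/
lemma coeff_key (r a : ℕ) :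
    genBinom (-1 - (r:ℤ)) a * (-1:ℂ) ^ a = genBinom ((r:ℤ) + a) r := by
  have h1 := genBinom_neg (-1 - (r:ℤ)) a
  have harg : ((a:ℤ) - 1 - (-1 - (r:ℤ))) = ((a + r : ℕ) : ℤ) := by push_cast; ring
  rw [harg] at h1
  have h2 : genBinom ((a + r : ℕ) : ℤ) a = genBinom ((r + a : ℕ) : ℤ) r := by
    rw [genBinom_natCast, genBinom_natCast]
    rw [Nat.choose_symm_add, Nat.add_comm a r]
  have h3 : ((r + a : ℕ) : ℤ) = (r:ℤ) + a := by push_cast; ring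
  rw [← h3, ← h2, h1]
  ring

lemma jcomp {V W : Type*} [AddCommGroup V] [Module ℂ V] [AddCommGroup W] [Module ℂ W]
    (Y : V →ₗ[ℂ] V →ₗ[ℂ] (ℤ → V)) (vone : V)
    (hcre0 : ∀ (v : V) (n : ℤ), 0 ≤ n → Y v vone n = 0)
    (YW : V →ₗ[ℂ] (ℤ → W →ₗ[ℂ] W))
    (hWvac : ∀ (n : ℤ) (w : W), YW vone n w = if n = -1 then w else 0)
    (u : V) (w : W) (r : ℕ) (m n : ℤ) :
    jdefect (fun a k x => YW a k x) (fun a b k => Y a b k) u vone w (-1 - (r:ℤ)) m n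
      = ((-1:ℂ)^r * genBinom n r) • YW u (m + n - (r:ℤ)) w
        - ∑ i ∈ Finset.range (r+1),
            genBinom m i • (YW (Y u vone (-1 - (r:ℤ) + i)) (m + n - i) w) := by
  rw [jdefect]
  congr 1
  -- first finsum
  · set l : ℤ := -1 - (r:ℤ) with hl
    have hvac1 : ∀ (k : ℤ) (x : W), YW vone k x = if k = -1 then x else 0 := hWvac
    have heps := neg_one_zpow_aux r
    set g : ℕ → W := fun i => (genBinom l i * (-1 : ℂ) ^ i) •
      (YW u (l + m - i) (YW vone (n + i) w)
        - (-1 : ℂ) ^ l • YW vone (l + n - i) (YW u (m + i) w)) with hg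
    show ∑ᶠ i : ℕ, g i = _
    rcases le_or_gt n (-1) with hneg | hpos
    · -- n ≤ -1 case
      set a : ℕ := (-1 - n).toNat with ha'
      have ha : (a : ℤ) = -1 - n := Int.toNat_of_nonneg (by omega)
      have hsingle : ∑ᶠ i : ℕ, g i = g a := by
        apply finsum_eq_single g a
        intro x hx
        have h1 : ¬ (n + (x:ℤ) = -1) := by
          intro hcon
          apply hx
          omega
        have h2 : ¬ (l + n - (x:ℤ) = -1) := by omega
        rw [hg]
        simp only [hvac1, if_neg h1, if_neg h2, map_zero, smul_zero, sub_zero, zero_sub,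
          smul_neg, neg_zero]
      rw [hsingle, hg]
      simp only [hvac1, if_pos (by omega : n + (a:ℤ) = -1),
        if_neg (by omega : ¬ (l + n - (a:ℤ) = -1)), map_zero, smul_zero, sub_zero]
      have harg : l + m - (a:ℤ) = m + n - r := by omega
      rw [harg]
      congr 1
      rw [hl, coeff_key r a]
      have : (r:ℤ) + a = (r:ℤ) - 1 - n := by omega
      rw [this, genBinom_neg]
    · rcases le_or_gt (r:ℤ) n with hge | hmid
      · -- n ≥ r case
        set b : ℕ := (n - r).toNat with hb'
        have hb : (b : ℤ) = n - r := Int.toNat_of_nonneg (by omega)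
        have hsingle : ∑ᶠ i : ℕ, g i = g b := by
          apply finsum_eq_single g b
          intro x hx
          have h1 : ¬ (n + (x:ℤ) = -1) := by omega
          have h2 : ¬ (l + n - (x:ℤ) = -1) := by
            intro hcon
            apply hx
            omega
          rw [hg]
          simp only [hvac1, if_neg h1, if_neg h2, map_zero, smul_zero, sub_zero, zero_sub,
            smul_neg, neg_zero]
        rw [hsingle, hg]
        simp only [hvac1, if_neg (by omega : ¬ (n + (b:ℤ) = -1)),
          if_pos (by omega : l + n - (b:ℤ) = -1), map_zero, zero_sub, smul_neg]
        rw [heps]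
        have harg : m + (b:ℤ) = m + n - r := by omega
        rw [harg]
        rw [← neg_smul, smul_smul]
        congr 1
        have hck := coeff_key r b
        have hn' : (r:ℤ) + b = n := by omega
        rw [hn'] at hck
        rw [hl, hck, pow_succ]
        ring
      · -- 0 ≤ n < r case
        have hzero : ∑ᶠ i : ℕ, g i = 0 := by
          apply finsum_eq_zero_of_forall_eq_zero
          intro x
          have h1 : ¬ (n + (x:ℤ) = -1) := by omega
          have h2 : ¬ (l + n - (x:ℤ) = -1) := by omega
          rw [hg]
          simp only [hvac1, if_neg h1, if_neg h2, map_zero, smul_zero, sub_zero, zero_sub,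
            smul_neg, neg_zero]
        rw [hzero]
        have hnt : n = ((n.toNat : ℕ) : ℤ) := by omega
        rw [hnt, genBinom_natCast, Nat.choose_eq_zero_of_lt (by omega)]
        simp
  -- second finsum
  · apply finsum_eq_sum_of_support_subset
    intro i hi
    simp only [Function.mem_support, ne_eq] at hi
    by_contra hcon
    simp only [Finset.coe_range, Set.mem_Iio, not_lt] at hcon
    apply hi
    have : Y u vone (-1 - (r:ℤ) + i) = 0 := hcre0 u _ (by omega)
    rw [this]
    simp

end mainProof

/-- if `(W, Y_W)` is a quasi module for a vertex algebra `V` (the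
Jacobi identity holds only after multiplication by some nonzero polynomial
`f(x₁,x₂)`, depending on the pair `(u,v)`), then `Y_W(𝒟v, x) = (d/dx)Y_W(v,x)`
for the canonical translation operator `𝒟v = v₋₂𝟏`.  In modes:
`(𝒟v)ₙ = −n·v_{n−1}`. -/
theorem stmt_11 (V W : Type*) [AddCommGroup V] [Module ℂ V]
    [AddCommGroup W] [Module ℂ W]
    (Y : V →ₗ[ℂ] V →ₗ[ℂ] (ℤ → V)) (vone : V) (hV : IsVA Y vone)
    (YW : V →ₗ[ℂ] (ℤ → W →ₗ[ℂ] W))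
    (hWtrunc : ∀ (v : V) (w : W), ∃ N : ℤ, ∀ n ≥ N, YW v n w = 0)
    (hWvac : ∀ (n : ℤ) (w : W), YW vone n w = if n = -1 then w else 0)
    (hWjac : ∀ u v : V, ∃ f : MvPolynomial (Fin 2) ℂ, f ≠ 0 ∧
      ∀ (w : W) (l m n : ℤ),
        ∑ m' ∈ f.support, MvPolynomial.coeff m' f •
          jdefect (fun a k x => YW a k x) (fun a b k => Y a b k) u v w
            l (m + (m' 0 : ℤ)) (n + (m' 1 : ℤ)) = 0) :
    ∀ (v : V) (n : ℤ) (w : W),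
      YW (Y v vone (-2)) n w = (-(n : ℂ)) • YW v (n - 1) w := by
  classical
  intro u nn ww
  obtain ⟨htr, hvac, hcre0, hcre1, hjacV⟩ := hV
  obtain ⟨f, hf0, hf⟩ := hWjac u vone
  set F : ℕ → ℤ → W := fun j s =>
    YW (Y u vone (-1 - (j:ℤ))) s ww - genBinom ((j:ℤ) - s - 1) j • YW u (s - (j:ℤ)) ww
    with hFdef
  -- the master relation
  have master : ∀ (r : ℕ) (s : ℤ),
      ∑ μ ∈ f.support, MvPolynomial.coeff μ f •
        (∑ i ∈ Finset.range (r+1),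
          genBinom ((μ 0 : ℤ)) i • F (r - i) (s + (μ 0 : ℤ) + (μ 1 : ℤ) - i)) = 0 := by
    intro r s
    have H := hf ww (-1 - (r:ℤ)) 0 s
    simp only [zero_add] at H
    have key : ∀ μ : Fin 2 →₀ ℕ,
        (∑ i ∈ Finset.range (r+1),
          genBinom ((μ 0 : ℤ)) i • F (r - i) (s + (μ 0 : ℤ) + (μ 1 : ℤ) - i))
          = - jdefect (fun a k x => YW a k x) (fun a b k => Y a b k) u vone ww
              (-1 - (r:ℤ)) ((μ 0 : ℤ)) (s + (μ 1 : ℤ)) := by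
      intro μ
      rw [jcomp Y vone hcre0 YW hWvac u ww r, neg_sub]
      have expand : ∀ i ∈ Finset.range (r+1),
          genBinom ((μ 0 : ℤ)) i • F (r - i) (s + (μ 0 : ℤ) + (μ 1 : ℤ) - i)
            = genBinom ((μ 0 : ℤ)) i
                • YW (Y u vone (-1 - (r:ℤ) + i)) ((μ 0 : ℤ) + (s + (μ 1 : ℤ)) - i) ww
              - (genBinom ((μ 0 : ℤ)) i
                  * genBinom ((r:ℤ) - (s + (μ 0 : ℤ) + (μ 1 : ℤ)) - 1) (r - i))
                  • YW u ((μ 0 : ℤ) + (s + (μ 1 : ℤ)) - r) ww := by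
        intro i hi
        simp only [Finset.mem_range] at hi
        have e : F (r - i) (s + (μ 0 : ℤ) + (μ 1 : ℤ) - i)
            = YW (Y u vone (-1 - (r:ℤ) + i)) ((μ 0 : ℤ) + (s + (μ 1 : ℤ)) - i) ww
              - genBinom ((r:ℤ) - (s + (μ 0 : ℤ) + (μ 1 : ℤ)) - 1) (r - i)
                  • YW u ((μ 0 : ℤ) + (s + (μ 1 : ℤ)) - (r:ℤ)) ww := by
          rw [hFdef]
          simp only
          rw [show (-1 - ((r - i : ℕ) : ℤ)) = -1 - (r:ℤ) + i by omega,
              show (((r - i : ℕ) : ℤ) - (s + (μ 0 : ℤ) + (μ 1 : ℤ) - i) - 1)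
                = (r:ℤ) - (s + (μ 0 : ℤ) + (μ 1 : ℤ)) - 1 by omega,
              show (s + (μ 0 : ℤ) + (μ 1 : ℤ) - (i:ℤ) - ((r - i : ℕ) : ℤ))
                = (μ 0 : ℤ) + (s + (μ 1 : ℤ)) - (r:ℤ) by omega,
              show (s + (μ 0 : ℤ) + (μ 1 : ℤ) - (i:ℤ))
                = (μ 0 : ℤ) + (s + (μ 1 : ℤ)) - (i:ℤ) by omega]
        rw [e, smul_sub, smul_smul]
      rw [Finset.sum_congr rfl expand, Finset.sum_sub_distrib, ← Finset.sum_smul,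
        genBinom_vandermonde (μ 0) ((r:ℤ) - (s + (μ 0 : ℤ) + (μ 1 : ℤ)) - 1) r,
        show ((μ 0 : ℤ) + ((r:ℤ) - (s + (μ 0 : ℤ) + (μ 1 : ℤ)) - 1))
          = (r:ℤ) - 1 - (s + (μ 1 : ℤ)) by omega,
        genBinom_neg (s + (μ 1 : ℤ)) r]
    calc ∑ μ ∈ f.support, MvPolynomial.coeff μ f •
          (∑ i ∈ Finset.range (r+1),
            genBinom ((μ 0 : ℤ)) i • F (r - i) (s + (μ 0 : ℤ) + (μ 1 : ℤ) - i))
        = ∑ μ ∈ f.support, - (MvPolynomial.coeff μ f •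
            jdefect (fun a k x => YW a k x) (fun a b k => Y a b k) u vone ww
              (-1 - (r:ℤ)) ((μ 0 : ℤ)) (s + (μ 1 : ℤ))) := by
          apply Finset.sum_congr rfl
          intro μ _
          rw [key μ, smul_neg]
      _ = - ∑ μ ∈ f.support, (MvPolynomial.coeff μ f •
            jdefect (fun a k x => YW a k x) (fun a b k => Y a b k) u vone ww
              (-1 - (r:ℤ)) ((μ 0 : ℤ)) (s + (μ 1 : ℤ))) := by
          rw [Finset.sum_neg_distrib]
      _ = 0 := by rw [H, neg_zero]
  -- F 0 = 0
  have hF0 : ∀ s : ℤ, F 0 s = 0 := by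
    intro s
    rw [hFdef]
    simp only [Nat.cast_zero, genBinom_zero]
    rw [show (-1 - (0:ℤ)) = -1 by ring, hcre1 u, one_smul,
      show (s - (0:ℤ)) = s by ring, sub_self]
  -- grouping data
  set T : Finset ℕ := f.support.image (fun μ => μ 0 + μ 1) with hT
  set Φ : ℕ → ℕ → ℂ := fun i t =>
    ∑ μ ∈ f.support.filter (fun μ => μ 0 + μ 1 = t),
      MvPolynomial.coeff μ f * ((μ 0).choose i : ℂ) with hΦ
  have hgroup : ∀ (i : ℕ) (G : ℤ → W) (s : ℤ),
      ∑ μ ∈ f.support, (MvPolynomial.coeff μ f * ((μ 0).choose i : ℂ))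
          • G (s + (μ 0 : ℤ) + (μ 1 : ℤ))
        = ∑ t ∈ T, Φ i t • G (s + (t : ℤ)) := by
    intro i G s
    rw [← Finset.sum_fiberwise_of_maps_to
      (fun μ (hμ : μ ∈ f.support) => Finset.mem_image_of_mem (fun μ => μ 0 + μ 1) hμ)
      (fun μ => (MvPolynomial.coeff μ f * ((μ 0).choose i : ℂ))
          • G (s + (μ 0 : ℤ) + (μ 1 : ℤ)))]
    apply Finset.sum_congr rfl
    intro t ht
    rw [hΦ]
    simp only
    rw [Finset.sum_smul]
    apply Finset.sum_congr rfl
    intro μ hμ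
    simp only [Finset.mem_filter] at hμ
    congr 2
    omega
  -- existence of a nonzero Φ
  have hexists : ∃ i t, Φ i t ≠ 0 := by
    have hsupp : f.support.Nonempty := by
      rw [Finset.nonempty_iff_ne_empty]
      intro hcon
      exact hf0 (by rwa [← MvPolynomial.support_eq_empty])
    have hTne : T.Nonempty := hsupp.image _
    set t0 : ℕ := T.max' hTne with ht0
    have hfib : (f.support.filter (fun μ => μ 0 + μ 1 = t0)).Nonempty := by
      obtain ⟨μ, hμ, hμt⟩ := Finset.mem_image.1 (T.max'_mem hTne)
      exact ⟨μ, Finset.mem_filter.2 ⟨hμ, hμt⟩⟩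
    have hIne : ((f.support.filter (fun μ => μ 0 + μ 1 = t0)).image
        (fun μ => μ 0)).Nonempty := hfib.image _
    set i0 : ℕ := ((f.support.filter (fun μ => μ 0 + μ 1 = t0)).image
        (fun μ => μ 0)).max' hIne with hi0
    obtain ⟨μs, hμs, hμs0⟩ := Finset.mem_image.1 (Finset.max'_mem _ hIne)
    refine ⟨i0, t0, ?_⟩
    have hΦval : Φ i0 t0 = MvPolynomial.coeff μs f := by
      rw [hΦ]
      simp only
      rw [Finset.sum_eq_single_of_mem μs hμs]
      · rw [hμs0, Nat.choose_self, Nat.cast_one, mul_one]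
      · intro ν hν hne
        have hν0 : ν 0 ≤ i0 :=
          Finset.le_max' _ (ν 0) (Finset.mem_image_of_mem (fun μ => μ 0) hν)
        rcases lt_or_eq_of_le hν0 with hlt | heq
        · rw [Nat.choose_eq_zero_of_lt hlt, Nat.cast_zero, mul_zero]
        · exfalso
          apply hne
          have h1 : ν 1 = μs 1 := by
            have e1 := (Finset.mem_filter.1 hν).2
            have e2 := (Finset.mem_filter.1 hμs).2
            omega
          rw [hi0] at heq
          ext x
          fin_cases x
          · show ν 0 = μs 0
            omega
          · exact h1
    rw [hΦval]
    exact (MvPolynomial.mem_support_iff).1 (Finset.mem_filter.1 hμs).1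
  -- minimal i
  set k : ℕ := Nat.find hexists with hk
  obtain ⟨tk, htk⟩ : ∃ t, Φ k t ≠ 0 := Nat.find_spec hexists
  have hklt : ∀ i < k, ∀ t, Φ i t = 0 := by
    intro i hi t
    by_contra hcon
    exact Nat.find_min hexists hi ⟨t, hcon⟩
  -- relation for F 1
  have hrel : ∀ s : ℤ, ∑ t ∈ T, Φ k t • F 1 (s + (t:ℤ)) = 0 := by
    intro s
    have M := master (k+1) (s + k)
    have step1 : ∑ μ ∈ f.support, MvPolynomial.coeff μ f •
        (∑ i ∈ Finset.range (k+1+1),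
          genBinom ((μ 0 : ℤ)) i • F (k+1 - i) (s + k + (μ 0 : ℤ) + (μ 1 : ℤ) - i))
        = ∑ i ∈ Finset.range (k+2), ∑ μ ∈ f.support,
            (MvPolynomial.coeff μ f * ((μ 0).choose i : ℂ))
              • F (k+1 - i) ((s + k - i) + (μ 0 : ℤ) + (μ 1 : ℤ)) := by
      simp only [Finset.smul_sum]
      rw [show k+1+1 = k+2 from rfl, Finset.sum_comm]
      apply Finset.sum_congr rfl
      intro i _
      apply Finset.sum_congr rfl
      intro μ _
      rw [genBinom_natCast, ← mul_smul,
        show s + (k:ℤ) + (μ 0 : ℤ) + (μ 1 : ℤ) - (i:ℤ)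
          = (s + (k:ℤ) - (i:ℤ)) + (μ 0 : ℤ) + (μ 1 : ℤ) by ring]
    rw [step1] at M
    rw [Finset.sum_eq_single_of_mem k (Finset.mem_range.2 (by omega))] at M
    · rw [hgroup k (F (k+1-k)) (s + k - k)] at M
      have hk1 : k + 1 - k = 1 := by omega
      have hk2 : s + (k:ℤ) - (k:ℤ) = s := by ring
      rw [hk1, hk2] at M
      exact M
    · intro i hi hne
      simp only [Finset.mem_range] at hi
      rcases lt_or_gt_of_ne hne with hlt | hgt
      · -- i < k : Φ i t = 0
        rw [hgroup i (F (k+1-i)) (s + k - i)]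
        apply Finset.sum_eq_zero
        intro t _
        rw [hklt i hlt t, zero_smul]
      · -- i = k+1 : F 0 = 0
        have : i = k + 1 := by omega
        subst this
        apply Finset.sum_eq_zero
        intro μ _
        have : k + 1 - (k+1) = 0 := by omega
        rw [this, hF0, smul_zero]
  -- truncation for F 1
  obtain ⟨N1, hN1⟩ := hWtrunc (Y u vone (-2)) ww
  obtain ⟨N2, hN2⟩ := hWtrunc u ww
  have htrunc : ∀ s : ℤ, max N1 (N2 + 1) ≤ s → F 1 s = 0 := by
    intro s hs
    rw [hFdef]
    simp only [Nat.cast_one]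
    rw [show (-1 - (1:ℤ)) = -2 by ring, hN1 s (by omega), hN2 (s-1) (by omega), smul_zero,
      sub_self]
  set N : ℤ := max N1 (N2 + 1) with hN
  -- t‑minimality data
  have htkT : tk ∈ T := by
    by_contra hcon
    apply htk
    rw [hΦ]
    simp only
    apply Finset.sum_eq_zero
    intro μ hμ
    exfalso
    apply hcon
    rw [hT]
    simp only [Finset.mem_filter] at hμ
    exact Finset.mem_image.2 ⟨μ, hμ.1, hμ.2⟩
  have hTfne : (T.filter (fun t => Φ k t ≠ 0)).Nonempty :=
    ⟨tk, Finset.mem_filter.2 ⟨htkT, htk⟩⟩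
  set t0 : ℕ := (T.filter (fun t => Φ k t ≠ 0)).min' hTfne with ht0
  have ht0mem := Finset.min'_mem _ hTfne
  have ht0T : t0 ∈ T := (Finset.mem_filter.1 ht0mem).1
  have ht0ne : Φ k t0 ≠ 0 := (Finset.mem_filter.1 ht0mem).2
  -- downward induction
  have hvanish : ∀ (d : ℕ) (s : ℤ), N - d ≤ s → F 1 s = 0 := by
    intro d
    induction d with
    | zero =>
      intro s hs
      exact htrunc s (by omega)
    | succ d ih =>
      intro s hs
      have R := hrel (s - t0)
      rw [Finset.sum_eq_single_of_mem t0 ht0T] at R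
      · rw [show s - (t0:ℤ) + (t0:ℤ) = s by ring] at R
        exact (smul_eq_zero.1 R).resolve_left ht0ne
      · intro t htT htne
        by_cases hz : Φ k t = 0
        · rw [hz, zero_smul]
        · have htmin : t0 ≤ t := Finset.min'_le _ _ (Finset.mem_filter.2 ⟨htT, hz⟩)
          have : t0 < t := lt_of_le_of_ne htmin (fun hcon => htne hcon.symm)
          rw [ih (s - t0 + t) (by omega), smul_zero]
  have hF1 : F 1 nn = 0 := hvanish (N - nn).toNat nn (by omega)
  -- conclude
  rw [hFdef] at hF1
  simp only [Nat.cast_one] at hF1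
  rw [show (-1 - (1:ℤ)) = -2 by ring] at hF1
  have := sub_eq_zero.1 hF1
  rw [this, genBinom_one]
  push_cast
  ring_nf
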